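/- Suppose z, w in the first Weyl algebra A₁ satisfy [z,w] = 1 and z = f(p) for some f ∈ K[X] (i.e., z has degree 0 in q). Then z = αp + β with α ∈ K^* and w = α^{-1}q + g(p) for some g ∈ K[X]; in particular z and w generate A₁ as a K-algebra. -/

import Mathlib

/-- The defining relation of the first Weyl algebra: `p q = q p + 1`,
where `p` and `q` are the images of the generators `0` and `1`. -/
inductive WeylRel (K : Type) [Field K] :
    FreeAlgebra K (Fin 2) → FreeAlgebra K (Fin 2) → Prop
  | rel : WeylRel K (FreeAlgebra.ι K 0 * FreeAlgebra.ι K 1)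
      (FreeAlgebra.ι K 1 * FreeAlgebra.ι K 0 + 1)

/-- The first Weyl algebra `A₁` over `K`. -/
abbrev Weyl (K : Type) [Field K] := RingQuot (WeylRel K)

/-- The generator `p` of `A₁`. -/
noncomputable def Wp (K : Type) [Field K] : Weyl K :=
  RingQuot.mkAlgHom K (WeylRel K) (FreeAlgebra.ι K 0)

/-- The generator `q` of `A₁`. -/
noncomputable def Wq (K : Type) [Field K] : Weyl K :=
  RingQuot.mkAlgHom K (WeylRel K) (FreeAlgebra.ι K 1)

/-- The homogeneous component `D_t = span{p^i q^s : s - i = t}` of `A₁`. -/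
noncomputable def WeylD (K : Type) [Field K] (t : ℤ) : Submodule K (Weyl K) :=
  Submodule.span K {x | ∃ i s : ℕ, (s : ℤ) - (i : ℤ) = t ∧ x = Wp K ^ i * Wq K ^ s}

/-!
Write `w = ∑ gᵢ(p) qⁱ`. The derivation `[p, ·]` acts on such sums as `∂/∂q`, and it commutes
with `[z, ·]` because `z = f(p)` commutes with `p`. If `w` has `q`-degree `n ≥ 2`, applying
`[p, ·]^(n-1)` to `[z, w] = 1` gives `[z, g(p) + n! gₙ(p) q] = 0`, i.e. `n! gₙ f' = 0`, so
`gₙ = 0`. Hence `w = g₀(p) + g₁(p) q` and `1 = [z, w] = g₁(p) f'(p)`, so `f'` is a nonzero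
constant `α` and `g₁ = α⁻¹`. That `K[X] → A₁, g ↦ g(p)` is injective is seen on the
representation `p ↦ X·`, `q ↦ -d/dX` of `A₁` on `K[X]`.
-/

open Polynomial

attribute [local instance] LieRing.ofAssociativeRing

theorem Ring.lie_mul {A : Type*} [Ring A] (x y z : A) : ⁅x, y * z⁆ = ⁅x, y⁆ * z + y * ⁅x, z⁆ := by
  simp only [Ring.lie_def]
  noncomm_ring

section CanonicalPair

variable {R A : Type*} [CommRing R] [Ring A] [Algebra R A] {a b : A}

theorem lie_eval₂_of_lie_eq_one {S : Type*} [CommSemiring S] (φ : S →+* A)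
    (hφ : ∀ s, Commute a (φ s)) (h : ⁅a, b⁆ = 1) (G : S[X]) :
    ⁅a, G.eval₂ φ b⁆ = (derivative G).eval₂ φ b := by
  induction G using Polynomial.induction_on with
  | C s => simp [(hφ s).lie_eq]
  | add G H hG hH => simp only [eval₂_add, derivative_add, lie_add, hG, hH]
  | monomial n s ih =>
    rw [pow_succ, ← mul_assoc, eval₂_mul_X, Ring.lie_mul, ih, h, mul_one,
      derivative_mul (f := C s * X ^ n), derivative_X, mul_one, eval₂_add, eval₂_mul_X]

theorem lie_aeval_left_of_lie_eq_one (h : ⁅a, b⁆ = 1) (g : R[X]) :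
    ⁅aeval a g, b⁆ = aeval a (derivative g) := by
  have h' : ⁅-b, a⁆ = 1 := by rw [neg_lie, lie_skew, h]
  rw [← lie_skew, ← neg_lie, aeval_def, aeval_def,
    lie_eval₂_of_lie_eq_one _ (fun r => (Algebra.commutes r (-b)).symm) h']

theorem commute_aeval_self (a : A) (g : R[X]) : Commute a (aeval a g) := by
  simpa using (commute_X g).map (aeval a)

variable (a b) in
/-- For `G = ∑ gᵢ(X) Yⁱ ∈ R[X][Y]`, the element `∑ gᵢ(a) bⁱ`, with every `a` to the left of
every `b`. -/
noncomputable def evalOrdered (G : R[X][X]) : A :=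
  G.eval₂ (aeval a).toRingHom b

theorem evalOrdered_one : evalOrdered a b (1 : R[X][X]) = 1 :=
  eval₂_one _ _

theorem evalOrdered_add (G H : R[X][X]) :
    evalOrdered a b (G + H) = evalOrdered a b G + evalOrdered a b H :=
  eval₂_add _ _

theorem evalOrdered_monomial (n : ℕ) (g : R[X]) :
    evalOrdered a b (monomial n g) = aeval a g * b ^ n :=
  eval₂_monomial _ _

theorem aeval_mul_evalOrdered (g : R[X]) (G : R[X][X]) :
    aeval a g * evalOrdered a b G = evalOrdered a b (g • G) :=
  (eval₂_smul _ _ _).symm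

theorem exists_mul_evalOrdered_of_lie_eq_one (h : ⁅a, b⁆ = 1) (G : R[X][X]) :
    ∃ H : R[X][X], b * evalOrdered a b G = evalOrdered a b H := by
  induction G using Polynomial.induction_on' with
  | add G H hG hH =>
    obtain ⟨G', hG'⟩ := hG
    obtain ⟨H', hH'⟩ := hH
    exact ⟨G' + H', by rw [evalOrdered_add, mul_add, hG', hH', evalOrdered_add]⟩
  | monomial n g =>
    refine ⟨monomial (n + 1) g - monomial n (derivative g), ?_⟩
    have hb : b * aeval a g = aeval a g * b - aeval a (derivative g) := by
      rw [← lie_aeval_left_of_lie_eq_one h, Ring.lie_def, sub_sub_cancel]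
    rw [sub_eq_add_neg, ← monomial_neg, evalOrdered_add, evalOrdered_monomial,
      evalOrdered_monomial, evalOrdered_monomial, ← mul_assoc, hb, map_neg, pow_succ']
    noncomm_ring

theorem lie_evalOrdered (h : ⁅a, b⁆ = 1) (G : R[X][X]) :
    ⁅a, evalOrdered a b G⁆ = evalOrdered a b (derivative G) :=
  lie_eval₂_of_lie_eq_one _ (commute_aeval_self a) h G

theorem lie_evalOrdered_iterate_derivative (h : ⁅a, b⁆ = 1) {z : A} (hz : Commute z a)
    (G : R[X][X]) (k : ℕ) :
    ⁅z, evalOrdered a b (derivative^[k] G)⁆ = (fun x => ⁅a, x⁆)^[k] ⁅z, evalOrdered a b G⁆ := by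
  induction k with
  | zero => rfl
  | succ k ih =>
    rw [Function.iterate_succ_apply', Function.iterate_succ_apply', ← lie_evalOrdered h,
      leibniz_lie, hz.lie_eq, zero_lie, zero_add, ih]

theorem evalOrdered_of_natDegree_le_one {G : R[X][X]} (hG : G.natDegree ≤ 1) :
    evalOrdered a b G = aeval a (G.coeff 1) * b + aeval a (G.coeff 0) := by
  conv_lhs => rw [eq_X_add_C_of_natDegree_le_one hG]
  simp [evalOrdered, eval₂_mul_X]

theorem lie_aeval_evalOrdered_of_natDegree_le_one (h : ⁅a, b⁆ = 1) (f : R[X]) {G : R[X][X]}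
    (hG : G.natDegree ≤ 1) :
    ⁅aeval a f, evalOrdered a b G⁆ = aeval a (G.coeff 1 * derivative f) := by
  have hcomm (g : R[X]) : ⁅aeval a f, aeval a g⁆ = 0 := ((Commute.all f g).map (aeval a)).lie_eq
  rw [evalOrdered_of_natDegree_le_one hG, lie_add, Ring.lie_mul, hcomm, hcomm, zero_mul,
    zero_add, add_zero, lie_aeval_left_of_lie_eq_one h, map_mul]

theorem natDegree_le_one_of_lie_aeval_evalOrdered_eq_one [NoZeroDivisors R] [CharZero R]
    (h : ⁅a, b⁆ = 1) (ha : Function.Injective (aeval a : R[X] → A)) {f : R[X]}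
    (hf : derivative f ≠ 0) {G : R[X][X]} (hG : ⁅aeval a f, evalOrdered a b G⁆ = 1) :
    G.natDegree ≤ 1 := by
  suffices ∀ n, G.natDegree ≤ n + 1 → G.natDegree ≤ 1 from this _ (Nat.le_succ _)
  intro n
  induction n with
  | zero => exact id
  | succ n ih =>
    intro hn
    refine ih (natDegree_le_pred hn ?_)
    set H := derivative^[n + 1] G
    have hH : H.natDegree ≤ 1 := (natDegree_iterate_derivative G (n + 1)).trans (by omega)
    have hlie : ⁅aeval a f, evalOrdered a b H⁆ = 0 := by
      rw [lie_evalOrdered_iterate_derivative h (commute_aeval_self a f).symm, hG,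
        Function.iterate_succ_apply, (Commute.one_right a).lie_eq]
      exact Function.iterate_fixed (lie_zero a) n
    rw [lie_aeval_evalOrdered_of_natDegree_le_one h f hH] at hlie
    have hH1 : H.coeff 1 = 0 :=
      (mul_eq_zero.1 (ha (hlie.trans (map_zero _).symm))).resolve_right hf
    rw [coeff_iterate_derivative, smul_eq_zero, Nat.descFactorial_eq_zero_iff_lt] at hH1
    simpa [add_comm] using hH1.resolve_left (by omega)

theorem derivative_ne_zero_of_lie_aeval_eq_one [IsAddTorsionFree R] [Nontrivial A] {f : R[X]}
    {w : A} (h : ⁅aeval a f, w⁆ = 1) : derivative f ≠ 0 := by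
  intro hf
  rw [eq_C_of_natDegree_eq_zero (derivative_eq_zero.1 hf), aeval_C,
    (Algebra.commute_algebraMap_left _ w).lie_eq] at h
  exact zero_ne_one h

end CanonicalPair

theorem exists_eq_C_mul_X_add_C_of_mul_derivative_eq_one {K : Type*} [Field K] [CharZero K]
    {f g : K[X]} (h : g * derivative f = 1) :
    ∃ α β : K, α ≠ 0 ∧ f = C α * X + C β ∧ g = C α⁻¹ := by
  obtain ⟨α, hα, hf'⟩ := isUnit_iff.1 (IsUnit.of_mul_eq_one_right g h)
  have hdeg : f.natDegree ≤ 1 := by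
    have := congrArg natDegree hf'
    rw [natDegree_C, natDegree_derivative] at this
    omega
  have hcoeff : f.coeff 1 = α := by
    simpa using ((congrArg (coeff · 0) hf').trans (coeff_derivative f 0)).symm
  refine ⟨α, f.coeff 0, hα.ne_zero, hcoeff ▸ eq_X_add_C_of_natDegree_le_one hdeg, ?_⟩
  calc g = g * C α * C α⁻¹ := by rw [mul_assoc, ← C_mul, mul_inv_cancel₀ hα.ne_zero, C_1, mul_one]
    _ = C α⁻¹ := by rw [hf', h, one_mul]

theorem adjoin_smul_add_eq_top {K A : Type*} [Field K] [Ring A] [Algebra K A] {a b : A}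
    (hab : Algebra.adjoin K {a, b} = ⊤) {α : K} (hα : α ≠ 0) (β : K) (g : K[X]) :
    Algebra.adjoin K {α • a + β • (1 : A), α⁻¹ • b + aeval a g} = ⊤ := by
  set S := Algebra.adjoin K {α • a + β • (1 : A), α⁻¹ • b + aeval a g}
  have hz : α • a + β • (1 : A) ∈ S := Algebra.subset_adjoin (Set.mem_insert _ _)
  have hw : α⁻¹ • b + aeval a g ∈ S := Algebra.subset_adjoin (Set.mem_insert_of_mem _ rfl)
  have ha : a ∈ S := by
    have := S.smul_mem (S.sub_mem hz (S.smul_mem S.one_mem β)) α⁻¹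
    rwa [add_sub_cancel_right, smul_smul, inv_mul_cancel₀ hα, one_smul] at this
  have hg : aeval a g ∈ S :=
    Algebra.adjoin_le (Set.singleton_subset_iff.2 ha) (aeval_mem_adjoin_singleton K a)
  have hb : b ∈ S := by
    have := S.smul_mem (S.sub_mem hw hg) α
    rwa [add_sub_cancel_right, smul_smul, mul_inv_cancel₀ hα, one_smul] at this
  rw [eq_top_iff, ← hab]
  exact Algebra.adjoin_le (Set.insert_subset ha (Set.singleton_subset_iff.2 hb))

namespace Weyl

variable (K : Type) [Field K]

theorem lie_Wp_Wq : ⁅Wp K, Wq K⁆ = 1 := by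
  rw [Ring.lie_def, sub_eq_iff_eq_add']
  simpa [Wp, Wq] using RingQuot.mkAlgHom_rel K (WeylRel.rel (K := K))

theorem adjoin_Wp_Wq : Algebra.adjoin K {Wp K, Wq K} = ⊤ := by
  have hrange : Set.range (RingQuot.mkAlgHom K (WeylRel K) ∘ FreeAlgebra.ι K) = {Wp K, Wq K} := by
    ext x
    simp [Fin.exists_fin_two, Wp, Wq, eq_comm]
  rw [← hrange, Set.range_comp, ← AlgHom.map_adjoin, FreeAlgebra.adjoin_range_ι, Algebra.map_top,
    AlgHom.range_eq_top]
  exact RingQuot.mkAlgHom_surjective K (WeylRel K)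

noncomputable def mulXRep : Weyl K →ₐ[K] Module.End K K[X] :=
  RingQuot.liftAlgHom K ⟨FreeAlgebra.lift K ![Algebra.lmul K K[X] X, -derivative], by
    rintro _ _ ⟨⟩
    refine LinearMap.ext fun g => ?_
    simp [derivative_mul]⟩

theorem mulXRep_aeval_Wp (g : K[X]) : mulXRep K (aeval (Wp K) g) = Algebra.lmul K K[X] g := by
  rw [← aeval_algHom_apply, mulXRep, Wp, RingQuot.liftAlgHom_mkAlgHom_apply,
    FreeAlgebra.lift_ι_apply]
  simp only [Matrix.cons_val_zero]
  rw [aeval_algHom_apply, aeval_X_left_apply]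

theorem aeval_Wp_injective : Function.Injective (aeval (Wp K) : K[X] → Weyl K) := by
  intro g h hgh
  simpa [mulXRep_aeval_Wp] using congrArg (fun x => mulXRep K x 1) hgh

theorem exists_eq_evalOrdered (x : Weyl K) : ∃ G : K[X][X], x = evalOrdered (Wp K) (Wq K) G := by
  have key : ∀ x ∈ Algebra.adjoin K {Wp K, Wq K}, ∀ G : K[X][X],
      ∃ H : K[X][X], x * evalOrdered (Wp K) (Wq K) G = evalOrdered (Wp K) (Wq K) H := by
    intro x hx
    induction hx using Algebra.adjoin_induction with
    | mem x hx =>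
      rcases hx with rfl | rfl
      · exact fun G => ⟨X • G, by rw [← aeval_mul_evalOrdered, aeval_X]⟩
      · exact exists_mul_evalOrdered_of_lie_eq_one (lie_Wp_Wq K)
    | algebraMap r => exact fun G => ⟨C r • G, by rw [← aeval_mul_evalOrdered, aeval_C]⟩
    | add x y _ _ hx hy =>
      intro G
      obtain ⟨H₁, hH₁⟩ := hx G
      obtain ⟨H₂, hH₂⟩ := hy G
      exact ⟨H₁ + H₂, by rw [add_mul, hH₁, hH₂, evalOrdered_add]⟩
    | mul x y _ _ hx hy =>
      intro G
      obtain ⟨H, hH⟩ := hy G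
      obtain ⟨H', hH'⟩ := hx H
      exact ⟨H', by rw [mul_assoc, hH, hH']⟩
  obtain ⟨G, hG⟩ := key x (adjoin_Wp_Wq K ▸ Algebra.mem_top) 1
  exact ⟨G, by rw [← hG, evalOrdered_one, mul_one]⟩

end Weyl

/-- If `[z,w] = 1` and `z = f(p)` for some `f ∈ K[X]`, then `z = αp + β` with
`α ∈ K^*` and `w = α⁻¹ q + g(p)` for some `g ∈ K[X]`; in particular `z` and `w`
generate `A₁`. -/
theorem weyl_degree_zero_in_q (K : Type) [Field K] [CharZero K]
    (z w : Weyl K) (hc : z * w - w * z = 1)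
    (f : Polynomial K) (hz : z = Polynomial.aeval (Wp K) f) :
    (∃ (α β : K) (g : Polynomial K), α ≠ 0 ∧
        z = α • Wp K + β • (1 : Weyl K) ∧
        w = α⁻¹ • Wq K + Polynomial.aeval (Wp K) g) ∧
      Algebra.adjoin K {z, w} = (⊤ : Subalgebra K (Weyl K)) := by
  obtain ⟨G, rfl⟩ := Weyl.exists_eq_evalOrdered K w
  subst hz
  have hinj := Weyl.aeval_Wp_injective K
  have : Nontrivial (Weyl K) := hinj.nontrivial
  have hlie : ⁅aeval (Wp K) f, evalOrdered (Wp K) (Wq K) G⁆ = 1 := hc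
  have hG := natDegree_le_one_of_lie_aeval_evalOrdered_eq_one (Weyl.lie_Wp_Wq K) hinj
    (derivative_ne_zero_of_lie_aeval_eq_one hlie) hlie
  obtain ⟨α, β, hα, rfl, hg⟩ := exists_eq_C_mul_X_add_C_of_mul_derivative_eq_one <| hinj <| by
    rw [← lie_aeval_evalOrdered_of_natDegree_le_one (Weyl.lie_Wp_Wq K) _ hG, hlie, map_one]
  have hz : aeval (Wp K) (C α * X + C β) = α • Wp K + β • (1 : Weyl K) := by
    simp [Algebra.smul_def]
  have hw : evalOrdered (Wp K) (Wq K) G = α⁻¹ • Wq K + aeval (Wp K) (G.coeff 0) := by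
    rw [evalOrdered_of_natDegree_le_one hG, hg, aeval_C, Algebra.smul_def]
  refine ⟨⟨α, β, G.coeff 0, hα, hz, hw⟩, ?_⟩
  rw [hz, hw]
  exact adjoin_smul_add_eq_top (Weyl.adjoin_Wp_Wq K) hα β _
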